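/- Let n ≥ 2, a > 0, and α = (α_1,…,α_n) ∈ (0,∞)^n with a α_k < 1 for all k; set β_k := (1 − a α_k)/α_k. Let μ ∈ ℝ^n, let Σ ∈ ℝ^{n×n} be a symmetric positive semidefinite matrix, and let Ψ(θ) = −a Log(1 − i⟨α⋄μ, θ⟩ + ½‖θ‖²_{α⋄Σ}) − Σ_{k=1}^n β_k Log(1 − i α_k μ_k θ_k + ½ α_k θ_k² Σ_{kk}). Let P be a probability measure on ℝ^n with finite second moments (∫ ‖x‖² P(dx) < ∞) whose characteristic function satisfies ∫ exp(i⟨θ,x⟩) P(dx) = exp(Ψ(θ)) for all θ ∈ ℝ^n. Then for all 1 ≤ k ≠ l ≤ n, ∫ x_k x_l P(dx) − (∫ x_k P(dx))(∫ x_l P(dx)) = a min(α_k, α_l) Σ_{kl} + a α_k α_l μ_k μ_l. -/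

import Mathlib

open MeasureTheory Complex

noncomputable section

/-- Euclidean inner product on `ℝ^n`. -/
def dot {n : ℕ} (x y : Fin n → ℝ) : ℝ := ∑ k, x k * y k

/-- Quadratic form `‖θ‖²_A = θ A θᵀ`. -/
def quad {n : ℕ} (A : Matrix (Fin n) (Fin n) ℝ) (θ : Fin n → ℝ) : ℝ :=
  ∑ k, ∑ l, θ k * A k l * θ l

/-- Outer product `t ⋄ μ` of vectors, `(t ⋄ μ)_k = t_k μ_k`. -/
def diaV {n : ℕ} (t μ : Fin n → ℝ) : Fin n → ℝ := fun k => t k * μ k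

/-- Outer product `t ⋄ Σ`, `(t ⋄ Σ)_{kl} = Σ_{kl} min(t_k, t_l)`. -/
def diaM {n : ℕ} (t : Fin n → ℝ) (A : Matrix (Fin n) (Fin n) ℝ) :
    Matrix (Fin n) (Fin n) ℝ := Matrix.of fun k l => A k l * min (t k) (t l)

/-- Lévy exponent of the weak variance-alpha-gamma process `WVAG^n(a, α, μ, Σ)`:
`Ψ(θ) = -a Log(1 - i⟨α⋄μ,θ⟩ + ½‖θ‖²_{α⋄Σ}) - ∑ₖ βₖ Log(1 - i αₖ μₖ θₖ + ½ αₖ θₖ² Σₖₖ)`,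
where `βₖ = (1 - a αₖ)/αₖ`. -/
def Ψwvag {n : ℕ} (a : ℝ) (α μ : Fin n → ℝ) (S : Matrix (Fin n) (Fin n) ℝ)
    (θ : Fin n → ℝ) : ℂ :=
  -(a : ℂ) * Complex.log (1 - Complex.I * (dot (diaV α μ) θ : ℂ) +
      (quad (diaM α S) θ : ℂ) / 2) -
    ∑ k, (((1 - a * α k) / α k : ℝ) : ℂ) *
      Complex.log (1 - Complex.I * ((α k * μ k * θ k : ℝ) : ℂ) +
        ((α k * θ k ^ 2 * S k k : ℝ) : ℂ) / 2)

/-! Along a direction `v`, `t ↦ Ψ(t v)` is a linear combination of logarithms of quadratics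
`w(t) = 1 - i c t + e t² / 2`, and `(log w)''(0) = e + c²`. For a
square-integrable real variable whose characteristic function is `exp ∘ g` near `0`, comparing
the first two derivatives at `0` gives `Var = -g''(0)`. Hence `Var ⟨v, X⟩` is an explicit
quadratic form in `v`, and the covariance of `X_k` and `X_l` follows by polarization with
`v = e_k, e_l, e_k + e_l`: the one-dimensional `β`-terms are diagonal and cancel. -/

open ProbabilityTheory Filter Topology

theorem variance_eq_neg_of_charFun_eq_exp {ν : Measure ℝ} [IsProbabilityMeasure ν]
    (hν : MemLp id 2 ν) {g g' : ℝ → ℂ} {g'' : ℂ}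
    (hchar : ∀ᶠ t in 𝓝 0, charFun ν t = exp (g t))
    (hg : ∀ᶠ t in 𝓝 0, HasDerivAt g (g' t) t) (hg' : HasDerivAt g' g'' 0) :
    (Var[id; ν] : ℂ) = -g'' := by
  have hmean := iteratedDeriv_charFun_zero (μ := ν) (n := 1) (hν.mono_exponent (by norm_num))
  have hsq := iteratedDeriv_charFun_zero (μ := ν) (n := 2) (by simpa using hν)
  rw [iteratedDeriv_one] at hmean
  rw [iteratedDeriv_succ, iteratedDeriv_one] at hsq
  have hexp0 : exp (g 0) = 1 := by simp [← hchar.self_of_nhds]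
  have hderiv : deriv (charFun ν) =ᶠ[𝓝 0] fun t ↦ exp (g t) * g' t := by
    filter_upwards [hchar.eventually_nhds, hg] with t ht hgt
    exact (hgt.cexp.congr_of_eventuallyEq ht).deriv
  have hderiv2 : HasDerivAt (deriv (charFun ν)) (deriv (deriv (charFun ν)) 0) 0 := by
    have hdiff := ContDiff.differentiable_iteratedDeriv 1
      (contDiff_charFun (μ := ν) (n := 2) (by simpa using hν)) (by norm_num)
    rw [iteratedDeriv_one] at hdiff
    exact (hdiff 0).hasDerivAt
  rw [hderiv2.unique ((hg.self_of_nhds.cexp.mul hg').congr_of_eventuallyEq hderiv), hexp0] at hsq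
  rw [hderiv.self_of_nhds] at hmean
  simp only [hexp0, one_mul, pow_one] at hmean hsq
  rw [variance_eq_sub hν]
  simp only [Pi.pow_apply, id, ofReal_sub, ofReal_pow]
  linear_combination hsq - (g' 0 + I * (∫ x, x ∂ν : ℝ)) * hmean +
    ((∫ x, x ^ 2 ∂ν : ℝ) - (∫ x, x ∂ν : ℝ) ^ 2 : ℂ) * I_sq

lemma memLp_two_apply_of_lintegral_sum_sq_lt_top {n : ℕ} {P : Measure (Fin n → ℝ)}
    (hmom : ∫⁻ x, ENNReal.ofReal (∑ k, x k ^ 2) ∂P < ⊤) (k : Fin n) :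
    MemLp (fun x ↦ x k) 2 P := by
  have hsum : Integrable (fun x : Fin n → ℝ ↦ ∑ j, x j ^ 2) P :=
    ⟨(by fun_prop : Measurable fun x : Fin n → ℝ ↦ ∑ j, x j ^ 2).aestronglyMeasurable,
      (hasFiniteIntegral_iff_ofReal (Eventually.of_forall fun x ↦ by positivity)).2 hmom⟩
  refine (memLp_two_iff_integrable_sq (measurable_pi_apply k).aestronglyMeasurable).2
    (hsum.mono' ((measurable_pi_apply k).pow_const 2).aestronglyMeasurable ?_)
  refine Eventually.of_forall fun x ↦ ?_
  rw [Real.norm_of_nonneg (sq_nonneg _)]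
  exact Finset.single_le_sum (f := fun j ↦ x j ^ 2) (fun j _ ↦ sq_nonneg _) (Finset.mem_univ k)

lemma memLp_dot {n : ℕ} {P : Measure (Fin n → ℝ)} (hP : ∀ k, MemLp (fun x ↦ x k) 2 P)
    (v : Fin n → ℝ) : MemLp (dot v) 2 P :=
  memLp_finsetSum _ fun k _ ↦ (hP k).const_mul (v k)

lemma dot_smul_left {n : ℕ} (t : ℝ) (v x : Fin n → ℝ) : dot (t • v) x = t * dot v x := by
  simp only [dot, Finset.mul_sum, Pi.smul_apply, smul_eq_mul, mul_assoc]

lemma dot_smul_right {n : ℕ} (t : ℝ) (u v : Fin n → ℝ) : dot u (t • v) = t * dot u v := by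
  simp only [dot, Finset.mul_sum, Pi.smul_apply, smul_eq_mul, mul_left_comm]

lemma quad_smul {n : ℕ} (A : Matrix (Fin n) (Fin n) ℝ) (t : ℝ) (v : Fin n → ℝ) :
    quad A (t • v) = t ^ 2 * quad A v := by
  simp only [quad, Finset.mul_sum, Pi.smul_apply, smul_eq_mul]
  exact Finset.sum_congr rfl fun _ _ ↦ Finset.sum_congr rfl fun _ _ ↦ by ring

lemma dot_comm {n : ℕ} (u v : Fin n → ℝ) : dot u v = dot v u := by
  simp only [dot, mul_comm]

lemma dot_single_one_right {n : ℕ} (u : Fin n → ℝ) (k : Fin n) :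
    dot u (Pi.single k 1) = u k := by
  simp [dot, Pi.single_apply]

lemma dot_single_one_add_single_one {n : ℕ} (u : Fin n → ℝ) (k l : Fin n) :
    dot u (Pi.single k 1 + Pi.single l 1) = u k + u l := by
  simp [dot, Pi.single_apply, mul_add, Finset.sum_add_distrib]

lemma quad_single_one {n : ℕ} (A : Matrix (Fin n) (Fin n) ℝ) (k : Fin n) :
    quad A (Pi.single k 1) = A k k := by
  simp [quad, Pi.single_apply]

lemma quad_single_one_add_single_one {n : ℕ} (A : Matrix (Fin n) (Fin n) ℝ) (k l : Fin n) :
    quad A (Pi.single k 1 + Pi.single l 1) = A k k + A l l + A k l + A l k := by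
  simp only [quad, Pi.add_apply, Pi.single_apply, add_mul, ite_mul, one_mul, zero_mul, mul_add,
    mul_ite, mul_one, mul_zero, Finset.sum_add_distrib, Finset.sum_ite_eq', Finset.mem_univ,
    if_true]
  ring

def vgBase (c e t : ℝ) : ℂ := 1 - I * c * t + e * t ^ 2 / 2

lemma vgBase_zero (c e : ℝ) : vgBase c e 0 = 1 := by simp [vgBase]

lemma hasDerivAt_vgBase (c e t : ℝ) : HasDerivAt (vgBase c e) (-(I * c) + e * t) t := by
  have h := (((hasDerivAt_id (t : ℂ)).const_mul (I * c)).const_sub 1).add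
    (((hasDerivAt_pow 2 (t : ℂ)).const_mul (e : ℂ)).div_const 2)
  exact h.comp_ofReal.congr_deriv (by push_cast; ring)

lemma eventually_hasDerivAt_log_vgBase (c e : ℝ) :
    ∀ᶠ t in 𝓝 0,
      HasDerivAt (fun s ↦ log (vgBase c e s)) ((-(I * c) + e * t) / vgBase c e t) t := by
  have hslit : ∀ᶠ t in 𝓝 (0 : ℝ), vgBase c e t ∈ slitPlane :=
    (hasDerivAt_vgBase c e 0).continuousAt.eventually_mem
      (isOpen_slitPlane.mem_nhds (by simp [vgBase_zero]))
  filter_upwards [hslit] with t ht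
  exact (hasDerivAt_vgBase c e t).clog_real ht

lemma hasDerivAt_logDeriv_vgBase (c e : ℝ) :
    HasDerivAt (fun t ↦ (-(I * c) + e * t) / vgBase c e t) (e + c ^ 2) 0 := by
  have hnum : HasDerivAt (fun t : ℝ ↦ -(I * c) + e * (t : ℂ)) e 0 := by
    simpa using ((hasDerivAt_id (0 : ℝ)).ofReal_comp.const_mul (e : ℂ)).const_add (-(I * c))
  refine (hnum.div (hasDerivAt_vgBase c e 0) (by simp [vgBase_zero])).congr_deriv ?_
  simp only [vgBase_zero, ofReal_zero]
  linear_combination (-(c : ℂ) ^ 2) * I_sq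

lemma Ψwvag_smul {n : ℕ} (a : ℝ) (α μ : Fin n → ℝ) (S : Matrix (Fin n) (Fin n) ℝ)
    (v : Fin n → ℝ) (t : ℝ) :
    Ψwvag a α μ S (t • v) =
      -a * log (vgBase (dot (diaV α μ) v) (quad (diaM α S) v) t) -
        ∑ j, (((1 - a * α j) / α j : ℝ) : ℂ) *
          log (vgBase (α j * μ j * v j) (α j * v j ^ 2 * S j j) t) := by
  simp only [Ψwvag, vgBase, dot_smul_right, quad_smul, Pi.smul_apply, smul_eq_mul]
  push_cast
  ring_nf

def wvagVar {n : ℕ} (a : ℝ) (α μ : Fin n → ℝ) (S : Matrix (Fin n) (Fin n) ℝ)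
    (v : Fin n → ℝ) : ℝ :=
  a * (quad (diaM α S) v + dot (diaV α μ) v ^ 2) +
    ∑ j, (1 - a * α j) / α j * (α j * v j ^ 2 * S j j + (α j * μ j * v j) ^ 2)

theorem variance_dot_eq_wvagVar {n : ℕ} (a : ℝ) (α μ : Fin n → ℝ)
    (S : Matrix (Fin n) (Fin n) ℝ) (P : Measure (Fin n → ℝ)) [IsProbabilityMeasure P]
    (hP : ∀ k, MemLp (fun x ↦ x k) 2 P)
    (hchar : ∀ θ : Fin n → ℝ,
      ∫ x, exp (I * (dot θ x : ℂ)) ∂P = exp (Ψwvag a α μ S θ))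
    (v : Fin n → ℝ) :
    Var[dot v; P] = wvagVar a α μ S v := by
  have hY : MemLp (dot v) 2 P := memLp_dot hP v
  have hYm : Measurable (dot v) := by unfold dot; fun_prop
  rw [show dot v = id ∘ dot v from rfl,
    ← variance_map measurable_id.aemeasurable hYm.aemeasurable]
  have hcf : ∀ t, charFun (P.map (dot v)) t = exp (Ψwvag a α μ S (t • v)) := fun t ↦ by
    rw [← hchar, charFun_apply_real, integral_map hYm.aemeasurable (by fun_prop)]
    refine integral_congr_ae (Eventually.of_forall fun x ↦ ?_)
    simp only [dot_smul_left]
    push_cast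
    ring_nf
  simp_rw [Ψwvag_smul] at hcf
  have hderiv := (eventually_hasDerivAt_log_vgBase (dot (diaV α μ) v) (quad (diaM α S) v)).and
    (eventually_all.2 fun j ↦ eventually_hasDerivAt_log_vgBase (α j * μ j * v j)
      (α j * v j ^ 2 * S j j))
  have := Measure.isProbabilityMeasure_map (μ := P) hYm.aemeasurable
  have hvar := variance_eq_neg_of_charFun_eq_exp
    ((memLp_map_measure_iff aestronglyMeasurable_id hYm.aemeasurable).2 hY)
    (Eventually.of_forall hcf)
    (hderiv.mono fun t ht ↦ (ht.1.const_mul _).fun_sub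
      (HasDerivAt.fun_sum fun j _ ↦ (ht.2 j).const_mul _))
    (((hasDerivAt_logDeriv_vgBase _ _).const_mul _).fun_sub
      (HasDerivAt.fun_sum fun j _ ↦ (hasDerivAt_logDeriv_vgBase _ _).const_mul _))
  apply ofReal_injective
  rw [hvar, wvagVar]
  push_cast
  ring

lemma wvagVar_single_add_single {n : ℕ} (a : ℝ) (α μ : Fin n → ℝ)
    {S : Matrix (Fin n) (Fin n) ℝ} {k l : Fin n} (hS : S l k = S k l) (hkl : k ≠ l) :
    wvagVar a α μ S (Pi.single k 1 + Pi.single l 1) =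
      wvagVar a α μ S (Pi.single k 1) + wvagVar a α μ S (Pi.single l 1) +
        2 * (a * min (α k) (α l) * S k l + a * α k * α l * μ k * μ l) := by
  have hdiag : ∀ j, ((Pi.single k 1 : Fin n → ℝ) j + (Pi.single l 1 : Fin n → ℝ) j) ^ 2 =
      (Pi.single k 1 : Fin n → ℝ) j ^ 2 + (Pi.single l 1 : Fin n → ℝ) j ^ 2 := by
    intro j
    by_cases hj : j = k <;> simp [Pi.single_apply, hj, hkl]
  simp only [wvagVar, quad_single_one_add_single_one, quad_single_one,
    dot_single_one_add_single_one, dot_single_one_right, diaM, diaV, Matrix.of_apply, mul_pow,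
    hdiag, Pi.add_apply]
  rw [hS, min_comm (α l) (α k)]
  simp only [mul_add, add_mul, Finset.sum_add_distrib]
  ring

theorem stmt9_general {n : ℕ} (a : ℝ) (α : Fin n → ℝ) (μ : Fin n → ℝ)
    (S : Matrix (Fin n) (Fin n) ℝ) (hS : S.PosSemidef)
    (P : Measure (Fin n → ℝ)) [IsProbabilityMeasure P]
    (hmom : ∫⁻ x, ENNReal.ofReal (∑ k, x k ^ 2) ∂P < ⊤)
    (hchar : ∀ θ : Fin n → ℝ,
      ∫ x, Complex.exp (Complex.I * (dot θ x : ℂ)) ∂P = Complex.exp (Ψwvag a α μ S θ)) :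
    ∀ k l : Fin n, k ≠ l →
      (∫ x, x k * x l ∂P) - (∫ x, x k ∂P) * (∫ x, x l ∂P) =
        a * min (α k) (α l) * S k l + a * α k * α l * μ k * μ l := by
  intro k l hkl
  have hP := memLp_two_apply_of_lintegral_sum_sq_lt_top hmom
  have hcov := covariance_eq_sub (hP k) (hP l)
  simp only [Pi.mul_apply] at hcov
  have hvar := variance_add (hP k) (hP l)
  have hdot : ∀ j : Fin n, dot (Pi.single j 1) = fun x ↦ x j := fun j ↦
    funext fun x ↦ by rw [dot_comm, dot_single_one_right]
  have hdot₂ : dot (Pi.single k 1 + Pi.single l 1) = (fun x ↦ x k) + fun x ↦ x l :=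
    funext fun x ↦ by rw [dot_comm, dot_single_one_add_single_one, Pi.add_apply]
  have hk := variance_dot_eq_wvagVar a α μ S P hP hchar (Pi.single k 1)
  have hl := variance_dot_eq_wvagVar a α μ S P hP hchar (Pi.single l 1)
  have hsum := variance_dot_eq_wvagVar a α μ S P hP hchar (Pi.single k 1 + Pi.single l 1)
  rw [hdot] at hk hl
  rw [hdot₂, wvagVar_single_add_single a α μ (by simpa using hS.1.apply k l) hkl] at hsum
  linarith

/-- Covariance of the components of the `WVAG^n(a,α,μ,Σ)` distribution: if `P` is a
probability measure with finite second moments and characteristic function `exp ∘ Ψ`,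
then `Cov(X_k, X_l) = a min(αₖ,αₗ) Σₖₗ + a αₖ αₗ μₖ μₗ` for `k ≠ l`. -/
theorem stmt9 {n : ℕ} (hn : 2 ≤ n) (a : ℝ) (ha : 0 < a) (α : Fin n → ℝ)
    (hα : ∀ k, 0 < α k) (hsmall : ∀ k, a * α k < 1) (μ : Fin n → ℝ)
    (S : Matrix (Fin n) (Fin n) ℝ) (hS : S.PosSemidef)
    (P : Measure (Fin n → ℝ)) [IsProbabilityMeasure P]
    (hmom : ∫⁻ x, ENNReal.ofReal (∑ k, x k ^ 2) ∂P < ⊤)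
    (hchar : ∀ θ : Fin n → ℝ,
      ∫ x, Complex.exp (Complex.I * (dot θ x : ℂ)) ∂P = Complex.exp (Ψwvag a α μ S θ)) :
    ∀ k l : Fin n, k ≠ l →
      (∫ x, x k * x l ∂P) - (∫ x, x k ∂P) * (∫ x, x l ∂P) =
        a * min (α k) (α l) * S k l + a * α k * α l * μ k * μ l :=
  stmt9_general a α μ S hS P hmom hchar
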